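/- arXiv:2003.03245 — 3 statements merged into one kernel-verified Lean document; each statement's English description precedes it below -/
import Mathlib

section
/- Let D be an atomic Boolean algebra and let A be a Boolean subalgebra of D such that A is a complete subalgebra of D (A ⊆_c D). Then A is atomic, i.e., below every nonzero element of A there is an atom of A. -/
/- STATEMENT 0: If D is an atomic Boolean algebra and A is a Boolean subalgebra of D
   which is a complete subalgebra of D (A ⊆_c D), then A is atomic: below every nonzero
   element of A there is an atom of A. -/

namespace Stmt0

variable {D : Type*} [BooleanAlgebra D]

/-- `a` is the least upper bound of `S` computed inside the subset `A`. -/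
def IsLubIn (A S : Set D) (a : D) : Prop :=
  a ∈ A ∧ (∀ s ∈ S, s ≤ a) ∧ ∀ b ∈ A, (∀ s ∈ S, s ≤ b) → a ≤ b

/-- `A ⊆_c D`: every supremum existing in `A` is also the supremum in `D`. -/
def IsCompleteSub (A : Set D) : Prop :=
  ∀ S ⊆ A, ∀ a : D, IsLubIn A S a → IsLUB S a

/-- A Boolean subalgebra of `D`, given by its carrier set. -/
structure BoolSubalg (D : Type*) [BooleanAlgebra D] where
  carrier : Set D
  top_mem : ⊤ ∈ carrier
  bot_mem : ⊥ ∈ carrier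
  sup_mem : ∀ {x y : D}, x ∈ carrier → y ∈ carrier → x ⊔ y ∈ carrier
  inf_mem : ∀ {x y : D}, x ∈ carrier → y ∈ carrier → x ⊓ y ∈ carrier
  compl_mem : ∀ {x : D}, x ∈ carrier → xᶜ ∈ carrier

/-- `a` is an atom of the subalgebra with carrier `A`. -/
def IsAtomIn (A : Set D) (a : D) : Prop :=
  a ∈ A ∧ a ≠ ⊥ ∧ ∀ b ∈ A, b ≤ a → b = ⊥ ∨ b = a

theorem stmt0 (hD : IsAtomic D) (A : BoolSubalg D)
    (hc : IsCompleteSub A.carrier) :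
    ∀ a ∈ A.carrier, a ≠ ⊥ → ∃ b, IsAtomIn A.carrier b ∧ b ≤ a := by
  intro a ha hne
  by_contra hno
  push_neg at hno
  obtain ⟨d, hd, hda⟩ : ∃ d, IsAtom d ∧ d ≤ a := by
    rcases hD.eq_bot_or_exists_atom_le a with h | h
    · exact absurd h hne
    · exact h
  have hdx : ∀ x : D, x ⊓ d = ⊥ ∨ d ≤ x := by
    intro x
    rcases lt_or_eq_of_le (inf_le_left : d ⊓ x ≤ d) with h | h
    · exact Or.inl (by rw [inf_comm]; exact hd.2 _ h)
    · exact Or.inr (h ▸ inf_le_right)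
  set S : Set D := {x | x ∈ A.carrier ∧ x ≤ a ∧ x ⊓ d = ⊥} with hS
  have hSA : S ⊆ A.carrier := fun x hx => hx.1
  have hlub : IsLubIn A.carrier S a := by
    refine ⟨ha, fun s hs => hs.2.1, ?_⟩
    intro b hb hub
    by_contra hab
    set c : D := a ⊓ bᶜ with hcdef
    have hcA : c ∈ A.carrier := A.inf_mem ha (A.compl_mem hb)
    have hcne : c ≠ ⊥ := by
      intro h
      apply hab
      have : a \ b = ⊥ := by rwa [sdiff_eq]
      exact sdiff_eq_bot_iff.mp this
    have hca : c ≤ a := inf_le_left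
    have hcb : c ≤ bᶜ := inf_le_right
    -- any nonzero element of A below c that avoids d gives a contradiction
    have key : ∀ x ∈ A.carrier, x ≤ c → x ⊓ d = ⊥ → x = ⊥ := by
      intro x hxA hxc hxd
      have hxS : x ∈ S := ⟨hxA, le_trans hxc hca, hxd⟩
      have hxb : x ≤ b := hub x hxS
      have : x ≤ b ⊓ bᶜ := le_inf hxb (le_trans hxc hcb)
      simpa using this
    rcases hdx c with hcd | hdc
    · exact hcne (key c hcA le_rfl hcd)
    · -- d ≤ c; c is not an atom of A, so it splits
      have hcnotatom : ¬ IsAtomIn A.carrier c := fun h => hno c h hca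
      have : ∃ e ∈ A.carrier, e ≤ c ∧ e ≠ ⊥ ∧ e ≠ c := by
        by_contra he
        push_neg at he
        exact hcnotatom ⟨hcA, hcne, fun b hbA hbc => by
          rcases eq_or_ne b ⊥ with h | h
          · exact Or.inl h
          · exact Or.inr (he b hbA hbc h)⟩
      obtain ⟨e, heA, hec, hene, henc⟩ := this
      set f : D := c ⊓ eᶜ with hfdef
      have hfA : f ∈ A.carrier := A.inf_mem hcA (A.compl_mem heA)
      have hfne : f ≠ ⊥ := by
        intro h
        apply henc
        have : c \ e = ⊥ := by rwa [sdiff_eq]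
        exact le_antisymm hec (sdiff_eq_bot_iff.mp this)
      rcases hdx e with hed | hde
      · exact hene (key e heA hec hed)
      · -- d ≤ e, so f ⊓ d = ⊥
        have hfd : f ⊓ d = ⊥ := by
          have : f ⊓ d ≤ eᶜ ⊓ e := inf_le_inf inf_le_right hde
          exact le_bot_iff.mp (by simpa using this)
        exact hfne (key f hfA inf_le_left hfd)
  have hLUB : IsLUB S a := hc S hSA a hlub
  have hadc : a ≤ dᶜ := hLUB.2 (fun x hx => le_compl_iff_disjoint_right.mpr
    (disjoint_iff.mpr hx.2.2))
  have : d ≤ d ⊓ dᶜ := le_inf le_rfl (le_trans hda hadc)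
  exact hd.1 (le_bot_iff.mp (by simpa using this))

end Stmt0
end

section
/- Let D be a Boolean algebra, A a Boolean subalgebra of D with A ⊆_c D, and let d be an atom of D. Then the set F = {x ∈ A : d ≤ x} is an ultrafilter of A, and F is principal: the infimum of F computed in A exists and is an atom a' of A belonging to F. -/
/- STATEMENT 1: D a Boolean algebra, A a Boolean subalgebra with A ⊆_c D, d an atom of D.
   Then F = {x ∈ A : d ≤ x} is an ultrafilter of A, and F is principal: the infimum of F
   computed in A exists and is an atom a' of A belonging to F. -/

namespace Stmt1

variable {D : Type*} [BooleanAlgebra D]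

def IsLubIn (A S : Set D) (a : D) : Prop :=
  a ∈ A ∧ (∀ s ∈ S, s ≤ a) ∧ ∀ b ∈ A, (∀ s ∈ S, s ≤ b) → a ≤ b

/-- `a` is the greatest lower bound of `S` computed inside the subset `A`. -/
def IsGlbIn (A S : Set D) (a : D) : Prop :=
  a ∈ A ∧ (∀ s ∈ S, a ≤ s) ∧ ∀ b ∈ A, (∀ s ∈ S, b ≤ s) → b ≤ a

def IsCompleteSub (A : Set D) : Prop :=
  ∀ S ⊆ A, ∀ a : D, IsLubIn A S a → IsLUB S a

structure BoolSubalg (D : Type*) [BooleanAlgebra D] where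
  carrier : Set D
  top_mem : ⊤ ∈ carrier
  bot_mem : ⊥ ∈ carrier
  sup_mem : ∀ {x y : D}, x ∈ carrier → y ∈ carrier → x ⊔ y ∈ carrier
  inf_mem : ∀ {x y : D}, x ∈ carrier → y ∈ carrier → x ⊓ y ∈ carrier
  compl_mem : ∀ {x : D}, x ∈ carrier → xᶜ ∈ carrier

def IsAtomIn (A : Set D) (a : D) : Prop :=
  a ∈ A ∧ a ≠ ⊥ ∧ ∀ b ∈ A, b ≤ a → b = ⊥ ∨ b = a

/-- `F` is an ultrafilter of the subalgebra with carrier `A`: a proper filter of `A`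
containing, for each `c ∈ A`, either `c` or its complement. -/
def IsUltrafilterIn (A F : Set D) : Prop :=
  F ⊆ A ∧ ⊤ ∈ F ∧ ⊥ ∉ F ∧
    (∀ x ∈ F, ∀ y ∈ F, x ⊓ y ∈ F) ∧
    (∀ x ∈ F, ∀ y ∈ A, x ≤ y → y ∈ F) ∧
    (∀ c ∈ A, c ∈ F ∨ cᶜ ∈ F)

theorem stmt1 (A : BoolSubalg D) (hc : IsCompleteSub A.carrier)
    (d : D) (hd : IsAtom d) :
    IsUltrafilterIn A.carrier {x ∈ A.carrier | d ≤ x} ∧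
    ∃ a' : D, IsGlbIn A.carrier {x ∈ A.carrier | d ≤ x} a' ∧
      IsAtomIn A.carrier a' ∧ a' ∈ {x ∈ A.carrier | d ≤ x} := by

  set F := {x ∈ A.carrier | d ≤ x} with hF
  have hdbot : d ≠ ⊥ := hd.1
  have hsplit : ∀ c ∈ A.carrier, c ∈ F ∨ cᶜ ∈ F := by
    intro c hcA
    rcases hd.le_iff.mp (inf_le_left : d ⊓ c ≤ d) with h | h
    · right
      refine ⟨A.compl_mem hcA, ?_⟩
      exact le_compl_iff_disjoint_right.mpr (disjoint_iff.mpr h)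
    · left
      exact ⟨hcA, inf_eq_left.mp h⟩
  have hFsubA : F ⊆ A.carrier := fun x hx => hx.1
  have hultra : IsUltrafilterIn A.carrier F := by
    refine ⟨hFsubA, ⟨A.top_mem, le_top⟩, fun h => hdbot (le_bot_iff.mp h.2),
      fun x hx y hy => ⟨A.inf_mem hx.1 hy.1, le_inf hx.2 hy.2⟩,
      fun x hx y hyA hle => ⟨hyA, hx.2.trans hle⟩, hsplit⟩
  refine ⟨hultra, ?_⟩
  set S : Set D := (·ᶜ) '' F with hS
  have hSA : S ⊆ A.carrier := by
    rintro s ⟨x, hx, rfl⟩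
    exact A.compl_mem hx.1
  have hnot : ¬ IsLubIn A.carrier S ⊤ := by
    intro h
    have hlub := hc S hSA ⊤ h
    have hub : dᶜ ∈ upperBounds S := by
      rintro s ⟨x, hx, rfl⟩
      exact compl_le_compl hx.2
    have : (⊤ : D) ≤ dᶜ := hlub.2 hub
    have : dᶜ = ⊤ := top_le_iff.mp this
    exact hdbot (by simpa using congrArg compl this)
  have hb : ∃ b ∈ A.carrier, (∀ s ∈ S, s ≤ b) ∧ ¬ (⊤ : D) ≤ b := by
    by_contra hcon
    push_neg at hcon
    exact hnot ⟨A.top_mem, fun s _ => le_top, fun b hbA hub => hcon b hbA hub⟩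
  obtain ⟨b, hbA, hub, hbtop⟩ := hb
  have hlow : ∀ x ∈ F, bᶜ ≤ x := by
    intro x hx
    have : xᶜ ≤ b := hub _ ⟨x, hx, rfl⟩
    exact compl_le_of_compl_le (by simpa using this)
  have hbF : bᶜ ∈ F := by
    rcases hsplit b hbA with h | h
    · exfalso
      have h1 : bᶜ ≤ b := hlow b h
      have : bᶜ = ⊥ := by
        have h2 : bᶜ ≤ bᶜ ⊓ b := le_inf le_rfl h1
        simpa using h2
      exact hbtop (top_le_iff.mpr (by simpa using congrArg compl this))
    · exact h
  refine ⟨bᶜ, ⟨A.compl_mem hbA, hlow, fun c hcA hlb => hlb _ hbF⟩, ?_, hbF⟩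
  refine ⟨A.compl_mem hbA, fun h => hdbot (le_bot_iff.mp (h ▸ hbF.2)), ?_⟩
  intro c hcA hcle
  rcases hsplit c hcA with h | h
  · right
    exact le_antisymm hcle (hlow c h)
  · left
    have h1 : c ≤ cᶜ := hcle.trans (hlow _ h)
    have := disjoint_self.mp (le_compl_iff_disjoint_left.mp h1)
    simpa using this


end Stmt1
end

section
/- Let 1 < n < ω, let D be the full weak set algebra of dimension ω with unit ^ωω^{(0̄)} (with cylindric operations C_i and diagonals D_{ij}), and let D' be the subalgebra of D generated by Nr_n D = {x ∈ D : C_i x = x for all i ∈ ω∖n}. Then D' is atomless: D' has no atoms. -/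
/- STATEMENT 14: 1 < n < ω.  D the full weak set algebra of dimension ω with unit
   ^ωω^{(0̄)} (cylindric operations C_i and diagonals D_{ij}); D' the subalgebra of D
   generated by Nr_n D = {x ∈ D : C_i x = x for all i ∈ ω∖n}.  Then D' is atomless. -/

namespace Stmt14

/-- Points of the weak space `^ωω^{(0̄)}`. -/
def W : Type := {s : ℕ → ℕ // {i | s i ≠ 0}.Finite}

/-- Cylindrification `C_i`, relativized to the unit (all of `W`). -/
def Ci (i : ℕ) (X : Set W) : Set W :=
  {s | ∃ t ∈ X, ∀ j : ℕ, j ≠ i → t.val j = s.val j}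

/-- Diagonal `D_{ij}`. -/
def Dij (i j : ℕ) : Set W := {s | s.val i = s.val j}

/-- The neat `n`-reduct of the full weak set algebra. -/
def NrN (n : ℕ) : Set (Set W) := {X | ∀ i : ℕ, n ≤ i → Ci i X = X}

/-- Closure under the operations of the full weak set algebra `D`. -/
def Closed (S : Set (Set W)) : Prop :=
  Set.univ ∈ S ∧ (∀ X ∈ S, Xᶜ ∈ S) ∧ (∀ X ∈ S, ∀ Y ∈ S, X ∪ Y ∈ S) ∧
  (∀ i : ℕ, ∀ X ∈ S, Ci i X ∈ S) ∧ (∀ i j : ℕ, Dij i j ∈ S)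

/-- `D'`: the subalgebra of `D` generated by `Nr_n D`. -/
def Dgen (n : ℕ) : Set (Set W) := ⋂₀ {S | NrN n ⊆ S ∧ Closed S}

/-- The set of "bad" dimensions of `X`. -/
def Bad (X : Set W) : Set ℕ := {i : ℕ | Ci i X ≠ X}

def Good (X : Set W) : Prop := (Bad X).Finite

lemma subset_ci (i : ℕ) (X : Set W) : X ⊆ Ci i X :=
  fun s hs => ⟨s, hs, fun _ _ => rfl⟩

lemma mem_of_agree {i : ℕ} {X : Set W} (h : Ci i X = X) {s t : W}
    (hs : s ∈ X) (hag : ∀ j, j ≠ i → s.val j = t.val j) : t ∈ X := by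
  rw [← h]; exact ⟨s, hs, hag⟩

lemma good_univ : Good (Set.univ : Set W) := by
  have : Bad (Set.univ : Set W) = ∅ := by
    ext i
    simp only [Bad, Set.mem_setOf_eq, Set.mem_empty_iff_false, iff_false, not_not]
    exact Set.Subset.antisymm (fun _ _ => trivial) (subset_ci i _)
  rw [Good, this]; exact Set.finite_empty

lemma ci_compl {i : ℕ} {X : Set W} (h : Ci i X = X) : Ci i Xᶜ = Xᶜ := by
  apply Set.Subset.antisymm _ (subset_ci i _)
  rintro s ⟨t, ht, hag⟩ hs
  exact ht (mem_of_agree h hs fun j hj => (hag j hj).symm)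

lemma good_compl {X : Set W} (h : Good X) : Good Xᶜ :=
  h.subset fun i hi => by
    simp only [Bad, Set.mem_setOf_eq] at hi ⊢
    exact fun hX => hi (ci_compl hX)

lemma ci_union (i : ℕ) (X Y : Set W) : Ci i (X ∪ Y) = Ci i X ∪ Ci i Y := by
  ext s
  constructor
  · rintro ⟨t, ht | ht, hag⟩
    · exact Or.inl ⟨t, ht, hag⟩
    · exact Or.inr ⟨t, ht, hag⟩
  · rintro (⟨t, ht, hag⟩ | ⟨t, ht, hag⟩)
    · exact ⟨t, Or.inl ht, hag⟩
    · exact ⟨t, Or.inr ht, hag⟩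

lemma good_union {X Y : Set W} (hX : Good X) (hY : Good Y) : Good (X ∪ Y) :=
  (hX.union hY).subset fun i hi => by
    simp only [Bad, Set.mem_setOf_eq, Set.mem_union] at hi ⊢
    by_contra hc
    push_neg at hc
    exact hi (by rw [ci_union, hc.1, hc.2])

lemma ci_ci {i j : ℕ} {X : Set W} (hij : j ≠ i) (h : Ci j X = X) :
    Ci j (Ci i X) = Ci i X := by
  apply Set.Subset.antisymm _ (subset_ci j _)
  rintro s ⟨t, ⟨u, hu, hagu⟩, hag⟩
  -- u ∈ X, u agrees with t off i; t agrees with s off j.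
  refine ⟨⟨fun k => if k = i then u.val k else s.val k, ?_⟩, ?_, ?_⟩
  · apply (u.2.union s.2).subset
    intro k hk
    simp only [Set.mem_setOf_eq] at hk
    by_cases hki : k = i
    · rw [if_pos hki] at hk; exact Or.inl hk
    · rw [if_neg hki] at hk; exact Or.inr hk
  · -- this point is in X since it agrees with u off j
    refine mem_of_agree h hu ?_
    intro k hkj
    by_cases hki : k = i
    · simp [hki]
    · simp only [if_neg hki]
      rw [hagu k hki, hag k hkj]
  · intro k hki
    simp [hki]

lemma good_ci {i : ℕ} {X : Set W} (h : Good X) : Good (Ci i X) :=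
  (h.union (Set.finite_singleton i)).subset fun j hj => by
    simp only [Bad, Set.mem_setOf_eq, Set.mem_union, Set.mem_singleton_iff] at hj ⊢
    by_contra hc
    push_neg at hc
    exact hj (ci_ci hc.2 hc.1)

lemma good_dij (i j : ℕ) : Good (Dij i j) :=
  (Set.finite_singleton i |>.union (Set.finite_singleton j)).subset fun k hk => by
    simp only [Bad, Set.mem_setOf_eq, Set.mem_union, Set.mem_singleton_iff] at hk ⊢
    by_contra hc
    push_neg at hc
    apply hk
    apply Set.Subset.antisymm _ (subset_ci k _)
    rintro s ⟨t, ht, hag⟩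
    show s.val i = s.val j
    rw [← hag i (Ne.symm hc.1), ← hag j (Ne.symm hc.2)]; exact ht

lemma good_nrn {n : ℕ} {X : Set W} (h : X ∈ NrN n) : Good X :=
  (Set.finite_Iio n).subset fun i hi => by
    simp only [Bad, Set.mem_setOf_eq] at hi
    simp only [Set.mem_Iio]
    by_contra hc
    push_neg at hc
    exact hi (h i hc)

lemma dgen_good {n : ℕ} {X : Set W} (h : X ∈ Dgen n) : Good X := by
  have := h {Y | Good Y} ⟨fun Y hY => good_nrn hY,
    good_univ, fun Y hY => good_compl hY, fun Y hY Z hZ => good_union hY hZ,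
    fun i Y hY => good_ci hY, fun i j => good_dij i j⟩
  exact this

lemma dgen_closed (n : ℕ) : Closed (Dgen n) := by
  refine ⟨?_, ?_, ?_, ?_, ?_⟩
  · intro S hS; exact hS.2.1
  · intro X hX S hS; exact hS.2.2.1 X (hX S hS)
  · intro X hX Y hY S hS; exact hS.2.2.2.1 X (hX S hS) Y (hY S hS)
  · intro i X hX S hS; exact hS.2.2.2.2.1 i X (hX S hS)
  · intro i j S hS; exact hS.2.2.2.2.2 i j

lemma dgen_inter {n : ℕ} {X Y : Set W} (hX : X ∈ Dgen n) (hY : Y ∈ Dgen n) :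
    X ∩ Y ∈ Dgen n := by
  have h := dgen_closed n
  have := h.2.1 _ (h.2.2.1 _ (h.2.1 X hX) _ (h.2.1 Y hY))
  rwa [Set.compl_union, compl_compl, compl_compl] at this

theorem stmt14 (n : ℕ) (hn : 1 < n) :
    ¬ ∃ a ∈ Dgen n, a ≠ (∅ : Set W) ∧
        ∀ b ∈ Dgen n, b ⊆ a → b = ∅ ∨ b = a := by
  rintro ⟨a, ha, hne, hatom⟩
  obtain ⟨s, hs⟩ := Set.nonempty_iff_ne_empty.2 hne
  have hgood : Good a := dgen_good ha
  have hB : (Bad a ∪ {k | s.val k ≠ 0}).Finite := hgood.union s.2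
  obtain ⟨i, hi⟩ := hB.infinite_compl.nonempty
  obtain ⟨j, hj⟩ := (hB.union (Set.finite_singleton i)).infinite_compl.nonempty
  simp only [Set.mem_compl_iff, Set.mem_union, Set.mem_setOf_eq,
    Set.mem_singleton_iff] at hi hj
  push_neg at hi hj
  have hia : Ci i a = a := by
    have := hi.1; simp only [Bad, Set.mem_setOf_eq, not_not] at this; exact this
  have hsi : s.val i = 0 := by have := hi.2; simpa using this
  have hsj : s.val j = 0 := by have := hj.1.2; simpa using this
  have hji : j ≠ i := hj.2
  set b := a ∩ Dij i j with hb
  have hbmem : b ∈ Dgen n := dgen_inter ha ((dgen_closed n).2.2.2.2 i j)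
  have hsb : s ∈ b := ⟨hs, by show s.val i = s.val j; rw [hsi, hsj]⟩
  -- the modified point t
  set t : W := ⟨fun k => if k = i then 1 else s.val k, by
    apply (s.2.union (Set.finite_singleton i)).subset
    intro k hk
    simp only [Set.mem_setOf_eq] at hk
    by_cases hki : k = i
    · exact Or.inr hki
    · rw [if_neg hki] at hk; exact Or.inl hk⟩ with htdef
  have hta : t ∈ a := by
    refine mem_of_agree hia hs ?_
    intro k hk
    show s.val k = if k = i then 1 else s.val k
    rw [if_neg hk]
  have htb : t ∉ b := by
    rintro ⟨-, hd⟩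
    have : t.val i = t.val j := hd
    simp only [htdef, if_pos rfl, if_neg hji] at this
    rw [hsj] at this
    exact one_ne_zero this
  rcases hatom b hbmem Set.inter_subset_left with h0 | hab
  · rw [h0] at hsb; exact hsb
  · rw [← hab] at hta; exact htb hta

end Stmt14
end
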